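/- For the Renyi entropy function h_p(x) = (1/(1-p))·log₂(x^p + (1-x)^p) with p > 1, and any c ≥ 1 and x ∈ [0,1] with c·x ∈ [0,1], one has h_p(c·x) ≤ p·c·h_p(x). -/

import Mathlib

/-!
With `G p t = -log (t ^ p + (1 - t) ^ p)` (`scaledRenyiEnt`) one has `h_p = G p / ((p - 1) log 2)`,
so the claim is `G p (c x) ≤ p c G p x`. For `p ≤ 2` the power sum `φ t = t ^ p + (1 - t) ^ p` is
log-convex on `[0, 1]` (`φ'² ≤ φ φ''` reduces to weighted AM-GM), so `G p` is concave with
`G p 0 = 0`, whence even `G p (c x) ≤ c G p x`. For `p ≥ 2` and `x ≤ 1/2`,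
`G p x ≥ G 2 x ≥ 2 log 2 · x` (the chord of the concave `G 2` from `0` to `1/2`), while
`G p y ≤ 2 p log 2 · y` on all of `[0, 1]`. For `x ≥ 1/2`, `G p` is decreasing on `[1/2, 1]` since
the power sum is Schur-convex.
-/

/-- The Renyi entropy function `h_p(x) = (1/(1-p)) log₂ (x^p + (1-x)^p)`. -/
noncomputable def renyiEnt (p x : ℝ) : ℝ :=
  (1 / (1 - p)) * Real.logb 2 (x ^ p + (1 - x) ^ p)

open Real Set

noncomputable def binPowSum (p t : ℝ) : ℝ := t ^ p + (1 - t) ^ p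

noncomputable def scaledRenyiEnt (p t : ℝ) : ℝ := -log (binPowSum p t)

theorem renyiEnt_eq_scaledRenyiEnt_div (p t : ℝ) :
    renyiEnt p t = scaledRenyiEnt p t / ((p - 1) * log 2) := by
  simp only [renyiEnt, scaledRenyiEnt, binPowSum, logb, ← neg_sub p 1, div_eq_mul_inv, mul_inv,
    inv_neg]
  ring

section binPowSum

variable {p q t x y : ℝ}

theorem binPowSum_pos (ht : t ∈ Icc 0 1) : 0 < binPowSum p t := by
  obtain ⟨ht0, ht1⟩ := ht
  rcases ht0.lt_or_eq with ht0 | rfl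
  · exact add_pos_of_pos_of_nonneg (rpow_pos_of_pos ht0 p) (rpow_nonneg (by linarith) p)
  · exact add_pos_of_nonneg_of_pos (rpow_nonneg le_rfl p) (by simp)

theorem binPowSum_one (t : ℝ) : binPowSum 1 t = 1 := by
  simp [binPowSum]

theorem binPowSum_half : binPowSum p (1 / 2) = 2 ^ (1 - p) := by
  rw [binPowSum, show (1 : ℝ) - 1 / 2 = 2⁻¹ by norm_num, one_div, ← two_mul,
    inv_rpow zero_le_two, ← rpow_neg zero_le_two, sub_eq_add_neg, rpow_add two_pos, rpow_one]

theorem binPowSum_le_of_mem_segment (hp : 1 ≤ p) (hy : y ∈ Icc 0 1)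
    (hx : x ∈ segment ℝ (1 - y) y) : binPowSum p x ≤ binPowSum p y := by
  obtain ⟨a, b, ha, hb, hab, rfl⟩ := hx
  have hy' : 1 - y ∈ Ici (0 : ℝ) := sub_nonneg.2 hy.2
  have h₁ := (convexOn_rpow hp).2 hy' hy.1 ha hb hab
  have h₂ := (convexOn_rpow hp).2 (mem_Ici.2 hy.1) hy' ha hb hab
  have hx' : 1 - (a • (1 - y) + b • y) = a • y + b • (1 - y) := by
    simp only [smul_eq_mul]; linear_combination -hab
  simp only [smul_eq_mul] at h₁ h₂ hx'
  rw [binPowSum, binPowSum, smul_eq_mul, smul_eq_mul, hx']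
  linear_combination h₁ + h₂ + (y ^ p + (1 - y) ^ p) * hab

theorem continuous_binPowSum (hp : 0 ≤ p) : Continuous (binPowSum p) :=
  (continuous_rpow_const hp).add
    ((continuous_rpow_const hp).comp (continuous_const.sub continuous_id))

theorem binPowSum_le_of_exponent_le (hq : 0 ≤ q) (hqp : q ≤ p) (ht : t ∈ Icc 0 1) :
    binPowSum p t ≤ binPowSum q t :=
  add_le_add (rpow_le_rpow_of_exponent_ge' ht.1 ht.2 hq hqp)
    (rpow_le_rpow_of_exponent_ge' (by linarith [ht.2]) (by linarith [ht.1]) hq hqp)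

end binPowSum

section scaledRenyiEnt

variable {p q t x y : ℝ}

theorem scaledRenyiEnt_zero (hp : p ≠ 0) : scaledRenyiEnt p 0 = 0 := by
  simp [scaledRenyiEnt, binPowSum, zero_rpow hp]

theorem scaledRenyiEnt_half : scaledRenyiEnt p (1 / 2) = (p - 1) * log 2 := by
  rw [scaledRenyiEnt, binPowSum_half, log_rpow two_pos]
  ring

theorem scaledRenyiEnt_le_of_exponent_le (hq : 0 ≤ q) (hqp : q ≤ p) (ht : t ∈ Icc 0 1) :
    scaledRenyiEnt q t ≤ scaledRenyiEnt p t :=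
  neg_le_neg (log_le_log (binPowSum_pos ht) (binPowSum_le_of_exponent_le hq hqp ht))

theorem scaledRenyiEnt_nonneg (hp : 1 ≤ p) (ht : t ∈ Icc 0 1) : 0 ≤ scaledRenyiEnt p t := by
  simpa [scaledRenyiEnt, binPowSum_one] using scaledRenyiEnt_le_of_exponent_le zero_le_one hp ht

theorem scaledRenyiEnt_le_of_mem_segment (hp : 1 ≤ p) (hy : y ∈ Icc 0 1)
    (hx : x ∈ segment ℝ (1 - y) y) : scaledRenyiEnt p y ≤ scaledRenyiEnt p x := by
  have hx01 : x ∈ Icc 0 1 :=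
    (convex_Icc 0 1).segment_subset ⟨sub_nonneg.2 hy.2, by linarith [hy.1]⟩ hy hx
  exact neg_le_neg (log_le_log (binPowSum_pos hx01) (binPowSum_le_of_mem_segment hp hy hx))

theorem scaledRenyiEnt_le_half (hp : 1 ≤ p) (ht : t ∈ Icc 0 1) :
    scaledRenyiEnt p t ≤ (p - 1) * log 2 :=
  scaledRenyiEnt_half (p := p) ▸ scaledRenyiEnt_le_of_mem_segment hp ht
    ⟨1 / 2, 1 / 2, by norm_num, by norm_num, by norm_num, by rw [smul_eq_mul, smul_eq_mul]; ring⟩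

theorem scaledRenyiEnt_antitoneOn (hp : 1 ≤ p) :
    AntitoneOn (scaledRenyiEnt p) (Icc (1 / 2) 1) := by
  intro x hx y hy hxy
  refine scaledRenyiEnt_le_of_mem_segment hp ⟨by linarith [hy.1], hy.2⟩ ?_
  rw [segment_eq_Icc (by linarith [hy.1])]
  exact ⟨by linarith [hx.1], hxy⟩

end scaledRenyiEnt

theorem mul_rpow_sub_two {r : ℝ} (hr : 0 < r) (p : ℝ) : r * r ^ (p - 2) = r ^ (p - 1) := by
  rw [mul_comm, ← rpow_add_one hr.ne']
  congr 1
  ring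

theorem rpow_eq_sq_mul_rpow_sub_two {r : ℝ} (hr : 0 < r) (p : ℝ) :
    r ^ p = r ^ 2 * r ^ (p - 2) := by
  rw [mul_comm, ← rpow_add_natCast hr.ne']
  congr 1
  push_cast
  ring

section concavity

variable {p t : ℝ}

theorem hasDerivAt_binPowSum (ht : t ∈ Ioo 0 1) :
    HasDerivAt (binPowSum p) (p * (t ^ (p - 1) - (1 - t) ^ (p - 1))) t := by
  have h : HasDerivAt (binPowSum p) (p * t ^ (p - 1) + -1 * p * (1 - t) ^ (p - 1)) t :=
    (hasDerivAt_rpow_const (Or.inl ht.1.ne')).add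
      (((hasDerivAt_id t).const_sub 1).rpow_const (Or.inl (sub_pos.2 ht.2).ne'))
  exact h.congr_deriv (by ring)

theorem hasDerivAt_binPowSum_deriv (ht : t ∈ Ioo 0 1) :
    HasDerivAt (fun s ↦ p * (s ^ (p - 1) - (1 - s) ^ (p - 1)))
      (p * (p - 1) * (t ^ (p - 2) + (1 - t) ^ (p - 2))) t := by
  have h := ((hasDerivAt_rpow_const (p := p - 1) (Or.inl ht.1.ne')).sub
    (((hasDerivAt_id t).const_sub 1).rpow_const (p := p - 1)
      (Or.inl (sub_pos.2 ht.2).ne'))).const_mul p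
  rw [show p - 1 - 1 = p - 2 by ring] at h
  exact h.congr_deriv (by simp only [id]; ring)

/-- Weighted AM-GM `t ^ (p - 1) * s ^ (2 - p) ≤ (p - 1) * t + (2 - p) * s`, times `s ^ (p - 2)`. -/
theorem mul_rpow_sub_two_le (hp₁ : 1 ≤ p) (hp₂ : p ≤ 2) {s : ℝ} (ht : 0 < t) (hs : 0 < s) :
    t * t ^ (p - 2) ≤ ((p - 1) * t + (2 - p) * s) * s ^ (p - 2) := by
  have h := geom_mean_le_arith_mean2_weighted (by linarith) (by linarith) ht.le hs.le
    (show p - 1 + (2 - p) = 1 by ring)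
  have hs' : s ^ (2 - p) * s ^ (p - 2) = 1 := by rw [← rpow_add hs]; simp
  calc t * t ^ (p - 2) = t ^ (p - 1) * s ^ (2 - p) * s ^ (p - 2) := by
        rw [mul_assoc, hs', mul_one, mul_rpow_sub_two ht]
    _ ≤ _ := mul_le_mul_of_nonneg_right h (rpow_nonneg hs.le _)

/-- `φ' ^ 2 ≤ φ'' * φ` for `φ = binPowSum p`: log-convexity of `binPowSum p`. -/
theorem sq_deriv_binPowSum_le (hp₁ : 1 ≤ p) (hp₂ : p ≤ 2) (ht : t ∈ Ioo 0 1) :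
    (p * (t ^ (p - 1) - (1 - t) ^ (p - 1))) ^ 2 ≤
      p * (p - 1) * (t ^ (p - 2) + (1 - t) ^ (p - 2)) * binPowSum p t := by
  obtain ⟨ht₀, ht₁⟩ := ht
  rw [binPowSum]
  set s := 1 - t
  have hs₀ : 0 < s := sub_pos.2 ht₁
  rw [← mul_rpow_sub_two ht₀, ← mul_rpow_sub_two hs₀, rpow_eq_sq_mul_rpow_sub_two ht₀ p,
    rpow_eq_sq_mul_rpow_sub_two hs₀ p]
  have h₁ := mul_rpow_sub_two_le hp₁ hp₂ ht₀ hs₀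
  have h₂ := mul_rpow_sub_two_le hp₁ hp₂ hs₀ ht₀
  set u := t ^ (p - 2)
  set v := s ^ (p - 2)
  have hu : 0 < u := rpow_pos_of_pos ht₀ _
  have hv : 0 < v := rpow_pos_of_pos hs₀ _
  have key : 0 ≤ (p - 1) * (u + v) * (t ^ 2 * u + s ^ 2 * v) - p * (t * u - s * v) ^ 2 := by
    nlinarith [mul_le_mul_of_nonneg_left h₁ (by positivity : 0 ≤ t * u),
      mul_le_mul_of_nonneg_left h₂ (by positivity : 0 ≤ s * v),
      (by positivity : 0 ≤ (p - 1) * (t * s * u * v))]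
  nlinarith [mul_nonneg (by linarith : (0 : ℝ) ≤ p) key]

theorem concaveOn_scaledRenyiEnt (hp₁ : 1 ≤ p) (hp₂ : p ≤ 2) :
    ConcaveOn ℝ (Icc 0 1) (scaledRenyiEnt p) := by
  set d₁ : ℝ → ℝ := fun s ↦ p * (s ^ (p - 1) - (1 - s) ^ (p - 1))
  set d₂ : ℝ → ℝ := fun s ↦ p * (p - 1) * (s ^ (p - 2) + (1 - s) ^ (p - 2))
  have hcont := (continuous_binPowSum (p := p) (by linarith)).continuousOn (s := Icc 0 1)
  refine concaveOn_of_hasDerivWithinAt2_nonpos (f' := fun s ↦ -(d₁ s / binPowSum p s))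
    (f'' := fun s ↦ -((d₂ s * binPowSum p s - d₁ s * d₁ s) / binPowSum p s ^ 2))
    (convex_Icc 0 1) (hcont.log fun s hs ↦ (binPowSum_pos hs).ne').neg ?_ ?_ ?_ <;>
    intro s hs <;> rw [interior_Icc] at hs <;>
    have hpos := binPowSum_pos (p := p) (Ioo_subset_Icc_self hs)
  · exact ((hasDerivAt_binPowSum hs).log hpos.ne').neg.hasDerivWithinAt
  · exact (((hasDerivAt_binPowSum_deriv hs).div (hasDerivAt_binPowSum hs)
      hpos.ne').neg).hasDerivWithinAt
  · have := sq_deriv_binPowSum_le hp₁ hp₂ hs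
    simp only [neg_nonpos]
    exact div_nonneg (by nlinarith) (sq_nonneg _)

end concavity

theorem ConcaveOn.smul_le_map_smul {𝕜 E β : Type*} [Ring 𝕜] [PartialOrder 𝕜] [IsOrderedRing 𝕜]
    [AddCommMonoid E] [Module 𝕜 E] [AddCommMonoid β] [PartialOrder β] [IsOrderedAddMonoid β]
    [Module 𝕜 β] [PosSMulMono 𝕜 β] {s : Set E} {f : E → β} (hf : ConcaveOn 𝕜 s f)
    (h₀ : 0 ∈ s) (hf₀ : 0 ≤ f 0) {x : E} (hx : x ∈ s) {a : 𝕜} (ha₀ : 0 ≤ a) (ha₁ : a ≤ 1) :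
    a • f x ≤ f (a • x) := by
  have h := hf.2 hx h₀ ha₀ (sub_nonneg.2 ha₁) (add_sub_cancel a 1)
  rw [smul_zero, add_zero] at h
  exact le_trans (le_add_of_nonneg_right (smul_nonneg (sub_nonneg.2 ha₁) hf₀)) h

section bounds

variable {p t : ℝ}

theorem neg_two_mul_log_two_mul_le_log_one_sub (ht : t ∈ Icc 0 (1 / 2)) :
    -(2 * log 2 * t) ≤ log (1 - t) := by
  have h := strictConcaveOn_log_Ioi.concaveOn.2 (mem_Ioi.2 one_pos) (mem_Ioi.2 one_half_pos)
    (by linarith [ht.2] : 0 ≤ 1 - 2 * t) (by linarith [ht.1] : 0 ≤ 2 * t) (by ring)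
  simp only [smul_eq_mul, log_one, one_div, log_inv] at h
  rw [show (1 - 2 * t) * 1 + 2 * t * 2⁻¹ = 1 - t by ring] at h
  linarith

theorem scaledRenyiEnt_le_mul (hp : 1 ≤ p) (ht : t ∈ Icc 0 1) :
    scaledRenyiEnt p t ≤ 2 * p * log 2 * t := by
  rcases le_total t (1 / 2) with ht₂ | ht₂
  · have hs : 0 < 1 - t := by linarith
    have hle : (1 - t) ^ p ≤ binPowSum p t := le_add_of_nonneg_left (rpow_nonneg ht.1 p)
    calc scaledRenyiEnt p t ≤ -log ((1 - t) ^ p) :=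
          neg_le_neg (log_le_log (rpow_pos_of_pos hs p) hle)
      _ = p * -log (1 - t) := by rw [log_rpow hs, mul_neg]
      _ ≤ p * (2 * log 2 * t) := mul_le_mul_of_nonneg_left
          (neg_le.1 (neg_two_mul_log_two_mul_le_log_one_sub ⟨ht.1, ht₂⟩)) (by linarith)
      _ = 2 * p * log 2 * t := by ring
  · have := log_pos one_lt_two
    calc scaledRenyiEnt p t ≤ (p - 1) * log 2 := scaledRenyiEnt_le_half hp ht
      _ ≤ 2 * p * log 2 * t := by
        nlinarith [mul_le_mul_of_nonneg_left ht₂ (by positivity : 0 ≤ 2 * p * log 2)]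

theorem mul_le_scaledRenyiEnt (hp : 2 ≤ p) (ht : t ∈ Icc 0 (1 / 2)) :
    2 * log 2 * t ≤ scaledRenyiEnt p t := by
  have ht₁ : t ∈ Icc (0 : ℝ) 1 := ⟨ht.1, by linarith [ht.2]⟩
  calc 2 * log 2 * t = (2 * t) • scaledRenyiEnt 2 (1 / 2) := by
        rw [scaledRenyiEnt_half, smul_eq_mul]; ring
    _ ≤ scaledRenyiEnt 2 ((2 * t) • (1 / 2)) :=
        (concaveOn_scaledRenyiEnt one_le_two le_rfl).smul_le_map_smul (left_mem_Icc.2 zero_le_one)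
          (scaledRenyiEnt_zero two_ne_zero).ge ⟨by norm_num, by norm_num⟩ (by linarith [ht.1])
          (by linarith [ht.2])
    _ = scaledRenyiEnt 2 t := by rw [smul_eq_mul]; congr 1; ring
    _ ≤ scaledRenyiEnt p t := scaledRenyiEnt_le_of_exponent_le zero_le_two hp ht₁

end bounds

theorem scaledRenyiEnt_mul_le {p c x : ℝ} (hp : 1 ≤ p) (hc : 1 ≤ c) (hx : 0 ≤ x)
    (hcx : c * x ≤ 1) : scaledRenyiEnt p (c * x) ≤ p * c * scaledRenyiEnt p x := by
  have hx₁ : x ∈ Icc 0 1 := ⟨hx, le_trans (le_mul_of_one_le_left hx hc) hcx⟩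
  have hcx₁ : c * x ∈ Icc 0 1 := ⟨by positivity, hcx⟩
  have hc₀ : 0 < c := by linarith
  have hGx := scaledRenyiEnt_nonneg hp hx₁
  have hpc : 1 ≤ p * c := one_le_mul_of_one_le_of_one_le hp hc
  rcases le_total p 2 with hp₂ | hp₂
  · have h := (concaveOn_scaledRenyiEnt hp hp₂).smul_le_map_smul (left_mem_Icc.2 zero_le_one)
      (scaledRenyiEnt_zero (by linarith)).ge hcx₁ (inv_nonneg.2 hc₀.le) (inv_le_one_of_one_le₀ hc)
    rw [smul_eq_mul, smul_eq_mul, inv_mul_cancel_left₀ hc₀.ne', inv_mul_le_iff₀ hc₀] at h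
    exact h.trans (mul_le_mul_of_nonneg_right (le_mul_of_one_le_left hc₀.le hp) hGx)
  rcases le_total x (1 / 2) with hx₂ | hx₂
  · calc scaledRenyiEnt p (c * x) ≤ 2 * p * log 2 * (c * x) := scaledRenyiEnt_le_mul hp hcx₁
      _ = p * c * (2 * log 2 * x) := by ring
      _ ≤ p * c * scaledRenyiEnt p x := mul_le_mul_of_nonneg_left
          (mul_le_scaledRenyiEnt hp₂ ⟨hx, hx₂⟩) (by linarith)
  · calc scaledRenyiEnt p (c * x) ≤ scaledRenyiEnt p x := scaledRenyiEnt_antitoneOn hp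
          ⟨hx₂, hx₁.2⟩ ⟨le_trans hx₂ (le_mul_of_one_le_left hx hc), hcx⟩
          (le_mul_of_one_le_left hx hc)
      _ ≤ p * c * scaledRenyiEnt p x := le_mul_of_one_le_left hGx hpc

theorem renyiEnt_mul_le (p c x : ℝ) (hp : 1 < p) (hc : 1 ≤ c)
    (hx : x ∈ Set.Icc (0 : ℝ) 1) (hcx : c * x ∈ Set.Icc (0 : ℝ) 1) :
    renyiEnt p (c * x) ≤ p * c * renyiEnt p x := by
  simp only [renyiEnt_eq_scaledRenyiEnt_div, ← mul_div_assoc]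
  exact div_le_div_of_nonneg_right (scaledRenyiEnt_mul_le hp.le hc hx.1 hcx.2)
    (mul_nonneg (sub_nonneg.2 hp.le) (log_nonneg one_le_two))
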